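/- Let V be a finite-dimensional complex inner product space with orthonormal basis (e_i), and let δ(e_i) = e_i ⊗ e_i be the associated copy map. Then a nonzero vector ψ ∈ V satisfies δ(ψ) = ψ ⊗ ψ if and only if ψ = e_i for some i. In other words, the copyable states of the copy-spider are exactly the orthonormal basis vectors. -/

import Mathlib

/-!
Comparing coordinates, `δ ψ = ψ ⊗ ψ` says `ψ j * ψ k = if j = k then ψ j else 0`. So every
coordinate is idempotent, hence `0` or `1`, and a coordinate equal to `1` forces all the others
to vanish; a nonzero `ψ` therefore is a basis vector.
-/

/-- The copy map δ(e_i) = e_i ⊗ e_i on ℂⁿ (with V ⊗ V realized as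
functions on `Fin n × Fin n`). -/
def copyVec (n : ℕ) (ψ : Fin n → ℂ) : Fin n × Fin n → ℂ :=
  fun p => if p.1 = p.2 then ψ p.1 else 0

/-- The tensor product of two vectors. -/
def tensorVec (n : ℕ) (ψ φ : Fin n → ℂ) : Fin n × Fin n → ℂ :=
  fun p => ψ p.1 * φ p.2

section

variable {ι R : Type*} [DecidableEq ι]

theorem Pi.single_one_mul_single_one_apply [MulZeroOneClass R] (i j k : ι) :
    (Pi.single i 1 : ι → R) j * (Pi.single i 1 : ι → R) k =
      if j = k then (Pi.single i 1 : ι → R) j else 0 := by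
  simp only [Pi.single_apply]
  split_ifs <;> simp_all

theorem exists_eq_single_one_of_mul_apply_eq_ite [MonoidWithZero R] [IsLeftCancelMulZero R]
    {ψ : ι → R} (hψ : ψ ≠ 0) (hmul : ∀ j k, ψ j * ψ k = if j = k then ψ j else 0) :
    ∃ i, ψ = Pi.single i 1 := by
  obtain ⟨i, hi⟩ := Function.ne_iff.mp hψ
  have hi_one : ψ i = 1 :=
    (IsIdempotentElem.iff_eq_zero_or_one.mp ((hmul i i).trans (if_pos rfl))).resolve_left hi
  refine ⟨i, funext fun j => ?_⟩
  rcases eq_or_ne j i with rfl | hji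
  · simpa using hi_one
  · have hj : ψ j = 0 := (mul_eq_zero.mp ((hmul i j).trans (if_neg hji.symm))).resolve_left hi
    simp [hj, hji]

end

theorem copyVec_eq_tensorVec_iff (n : ℕ) (ψ : Fin n → ℂ) :
    copyVec n ψ = tensorVec n ψ ψ ↔ ∀ j k, ψ j * ψ k = if j = k then ψ j else 0 := by
  simp only [funext_iff, Prod.forall, copyVec, tensorVec, eq_comm]

/-- a nonzero ψ satisfies δ(ψ) = ψ ⊗ ψ iff ψ is one of the
orthonormal basis vectors e_i; copyable states are exactly basis vectors. -/
theorem copyable_iff_basis (n : ℕ) (ψ : Fin n → ℂ) (hψ : ψ ≠ 0) :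
    copyVec n ψ = tensorVec n ψ ψ ↔ ∃ i : Fin n, ψ = Pi.single i 1 := by
  rw [copyVec_eq_tensorVec_iff]
  constructor
  · exact exists_eq_single_one_of_mul_apply_eq_ite hψ
  · rintro ⟨i, rfl⟩
    exact Pi.single_one_mul_single_one_apply i
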